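/- arXiv:2212.14200 — 7 statements merged into one kernel-verified Lean document; each statement's English description precedes it below -/
import Mathlib

section
/- Let x and y be two distinct points in the Euclidean plane ℝ², and let z be a point with z ∉ {x,y} such that the angle ∠xzy is at least 2π/3. Then ‖x−z‖+‖y−z‖ ≤ (2/√3)·‖x−y‖. Equivalently, the lens α(xy) with α = 2π/3 is contained in the ellipse E(xy) = {w ∈ ℝ² : ‖x−w‖+‖y−w‖ ≤ (2/√3)‖x−y‖}. -/
/-!
By the law of cosines, `‖x - y‖² = a² + b² - 2ab cos ∠xzy` with `a = ‖x - z‖`, `b = ‖y - z‖`.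
Since `a² + b² - 2ab cos α - (a + b)² sin² (α / 2) = (a - b)² (1 + cos α) / 2 ≥ 0`, an angle
`∠xzy ≥ α` forces `(a + b) sin (α / 2) ≤ ‖x - y‖`; for `α = 2π/3` this is the claim.
-/

open Real EuclideanGeometry

theorem sq_add_mul_sin_sq_half_le (a b α : ℝ) :
    (a + b) ^ 2 * sin (α / 2) ^ 2 ≤ a ^ 2 + b ^ 2 - 2 * a * b * cos α := by
  have hsin : sin (α / 2) ^ 2 = (1 - cos α) / 2 := by
    rw [sin_sq_eq_half_sub, mul_div_cancel₀ _ two_ne_zero]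
    ring
  rw [hsin]
  nlinarith [mul_nonneg (sq_nonneg (a - b)) (neg_le_iff_add_nonneg'.1 (neg_one_le_cos α))]

theorem dist_add_dist_mul_sin_half_le_of_le_angle {V P : Type*} [NormedAddCommGroup V]
    [InnerProductSpace ℝ V] [MetricSpace P] [NormedAddTorsor V P] {x y z : P} {α : ℝ}
    (hα : 0 ≤ α) (h : α ≤ ∠ x z y) :
    (dist x z + dist y z) * sin (α / 2) ≤ dist x y := by
  have hcos : cos (∠ x z y) ≤ cos α := cos_le_cos_of_nonneg_of_le_pi hα (angle_le_pi x z y) h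
  have hsin : 0 ≤ sin (α / 2) :=
    sin_nonneg_of_nonneg_of_le_pi (by linarith) (by linarith [angle_le_pi x z y, pi_pos])
  have hsq : ((dist x z + dist y z) * sin (α / 2)) ^ 2 ≤ dist x y ^ 2 := by
    calc ((dist x z + dist y z) * sin (α / 2)) ^ 2
        ≤ dist x z ^ 2 + dist y z ^ 2 - 2 * dist x z * dist y z * cos α := by
          rw [mul_pow]; exact sq_add_mul_sin_sq_half_le _ _ _
      _ ≤ dist x z ^ 2 + dist y z ^ 2 - 2 * dist x z * dist y z * cos (∠ x z y) := by
          gcongr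
      _ = dist x y ^ 2 := by simp only [sq, law_cos x z y]
  exact (pow_le_pow_iff_left₀ (by positivity) dist_nonneg two_ne_zero).1 hsq

theorem lens_subset_ellipse_general (x y z : EuclideanSpace ℝ (Fin 2))
    (hangle : 2 * Real.pi / 3 ≤ EuclideanGeometry.angle x z y) :
    ‖x - z‖ + ‖y - z‖ ≤ (2 / Real.sqrt 3) * ‖x - y‖ := by
  have h := dist_add_dist_mul_sin_half_le_of_le_angle (by positivity) hangle
  rw [show 2 * π / 3 / 2 = π / 3 by ring, sin_pi_div_three] at h
  simp only [dist_eq_norm] at h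
  calc ‖x - z‖ + ‖y - z‖ = 2 / √3 * ((‖x - z‖ + ‖y - z‖) * (√3 / 2)) := by field_simp
    _ ≤ 2 / √3 * ‖x - y‖ := by gcongr

/-- if `x ≠ y`, `z ∉ {x, y}` and the angle `∠ x z y` is at least `2π/3`,
then `‖x - z‖ + ‖y - z‖ ≤ (2/√3) ‖x - y‖`; i.e. the `2π/3`-lens of the segment `xy`
is contained in the ellipse `E(xy)`. -/
theorem lens_subset_ellipse (x y z : EuclideanSpace ℝ (Fin 2))
    (hxy : x ≠ y) (hzx : z ≠ x) (hzy : z ≠ y)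
    (hangle : 2 * Real.pi / 3 ≤ EuclideanGeometry.angle x z y) :
    ‖x - z‖ + ‖y - z‖ ≤ (2 / Real.sqrt 3) * ‖x - y‖ :=
  lens_subset_ellipse_general x y z hangle
end

section
/- Let f₁,…,f_m : ℝⁿ → ℝ be convex functions and define f(x) = max{f₁(x),…,f_m(x)}. Suppose f attains its global minimum at a point x ∈ ℝⁿ, and suppose that fᵢ is differentiable at x for every index i in I(x) = {1 ≤ i ≤ m : fᵢ(x) = f(x)}. Then the origin lies in the convex hull conv{∇fᵢ(x) : i ∈ I(x)} of the gradients of the active functions at x. -/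
open scoped BigOperators

/-- if `f = max {f₁, …, f_m}` of convex functions `fᵢ : ℝⁿ → ℝ` attains its
global minimum at `x`, and every active `fᵢ` (i.e. `fᵢ x = f x`) is differentiable at `x`,
then the origin lies in the convex hull of the gradients of the active functions at `x`. -/
theorem zero_mem_convexHull_gradients (n m : ℕ) (hm : 0 < m)
    (f : Fin m → EuclideanSpace ℝ (Fin n) → ℝ)
    (hconv : ∀ i, ConvexOn ℝ Set.univ (f i))
    (x : EuclideanSpace ℝ (Fin n))
    (hmin : ∀ y : EuclideanSpace ℝ (Fin n),
      Finset.univ.sup' ⟨⟨0, hm⟩, Finset.mem_univ _⟩ (fun i => f i x)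
        ≤ Finset.univ.sup' ⟨⟨0, hm⟩, Finset.mem_univ _⟩ (fun i => f i y))
    (hdiff : ∀ i, f i x = Finset.univ.sup' ⟨⟨0, hm⟩, Finset.mem_univ _⟩ (fun i => f i x) →
      DifferentiableAt ℝ (f i) x) :
    (0 : EuclideanSpace ℝ (Fin n)) ∈ convexHull ℝ
      {g : EuclideanSpace ℝ (Fin n) |
        ∃ i, f i x = Finset.univ.sup' ⟨⟨0, hm⟩, Finset.mem_univ _⟩ (fun i => f i x) ∧
          g = gradient (f i) x} := by
  classical
  set M : ℝ := Finset.univ.sup' ⟨⟨0, hm⟩, Finset.mem_univ _⟩ (fun i => f i x) with hM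
  by_contra h0
  set S : Set (EuclideanSpace ℝ (Fin n)) := {g | ∃ i, f i x = M ∧ g = gradient (f i) x} with hS
  have hSfin : S.Finite := by
    apply Set.Finite.subset (Set.finite_range (fun i => gradient (f i) x))
    rintro g ⟨i, _, rfl⟩; exact ⟨i, rfl⟩
  have h0' : (0 : EuclideanSpace ℝ (Fin n)) ∉ convexHull ℝ S := h0
  obtain ⟨φ, u, hφ, hu⟩ :=
    geometric_hahn_banach_closed_point (convex_convexHull ℝ S)
      (hSfin.isCompact_convexHull (𝕜 := ℝ)).isClosed h0'
  have hu0 : u < 0 := by simpa using hu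
  set d : EuclideanSpace ℝ (Fin n) := (InnerProductSpace.toDual ℝ (EuclideanSpace ℝ (Fin n))).symm φ with hd
  have hφd : ∀ a : EuclideanSpace ℝ (Fin n), φ a = inner ℝ d a := by
    intro a; rw [hd, InnerProductSpace.toDual_symm_apply]
  -- the key: every active gradient has negative inner product with d
  have hkey : ∀ i, f i x = M → ∀ᶠ t in nhdsWithin (0:ℝ) (Set.Ioi 0),
      f i (x + t • d) < M := by
    intro i hi
    have hder : HasDerivAt (fun t : ℝ => f i (x + t • d)) (fderiv ℝ (f i) x d) 0 := by
      have hc : HasDerivAt (fun t : ℝ => x + t • d) d 0 := by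
        simpa using ((hasDerivAt_id (0:ℝ)).smul_const d).const_add x
      have hf' : HasFDerivAt (f i) (fderiv ℝ (f i) x) (x + (0:ℝ) • d) := by
        simpa using (hdiff i hi).hasFDerivAt
      exact hf'.comp_hasDerivAt 0 hc
    have hneg : fderiv ℝ (f i) x d < 0 := by
      have hmem : gradient (f i) x ∈ convexHull ℝ S :=
        subset_convexHull ℝ S ⟨i, hi, rfl⟩
      have h1 : φ (gradient (f i) x) < u := hφ _ hmem
      have h2 : φ (gradient (f i) x) = fderiv ℝ (f i) x d := by
        rw [hφd, real_inner_comm, gradient, InnerProductSpace.toDual_symm_apply]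
      linarith
    have hslope := hasDerivAt_iff_tendsto_slope.mp hder
    have hev : ∀ᶠ t in nhdsWithin (0:ℝ) {(0:ℝ)}ᶜ,
        slope (fun t : ℝ => f i (x + t • d)) 0 t < 0 :=
      hslope.eventually_mem (Iio_mem_nhds hneg)
    have hle : nhdsWithin (0:ℝ) (Set.Ioi 0) ≤ nhdsWithin (0:ℝ) {(0:ℝ)}ᶜ :=
      nhdsWithin_mono _ (fun t ht => ne_of_gt ht)
    filter_upwards [hle hev, self_mem_nhdsWithin] with t ht ht0
    have ht0' : (0:ℝ) < t := ht0
    rw [slope_def_field, div_lt_iff₀ (by linarith : (0:ℝ) < t - 0)] at ht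
    simp only [zero_smul, add_zero, zero_mul] at ht
    linarith [hi, ht]
  -- inactive functions stay below M by continuity
  have hkey2 : ∀ i, f i x ≠ M → ∀ᶠ t in nhdsWithin (0:ℝ) (Set.Ioi 0),
      f i (x + t • d) < M := by
    intro i hi
    have hlt : f i x < M :=
      lt_of_le_of_ne (Finset.le_sup' (fun j => f j x) (Finset.mem_univ i)) hi
    have hcont : ContinuousAt (f i) x := by
      have := (hconv i).continuousOn isOpen_univ
      exact (this x (Set.mem_univ x)).continuousAt (by simp [Filter.univ_mem])
    have hcurve : ContinuousAt (fun t : ℝ => x + t • d) 0 := by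
      fun_prop
    have : ContinuousAt (fun t : ℝ => f i (x + t • d)) 0 := by
      refine ContinuousAt.comp ?_ hcurve
      simpa using hcont
    have := this.eventually_mem (Iio_mem_nhds (by simpa using hlt))
    exact nhdsWithin_le_nhds this
  have hall : ∀ᶠ t in nhdsWithin (0:ℝ) (Set.Ioi 0), ∀ i, f i (x + t • d) < M := by
    rw [Filter.eventually_all]
    intro i
    by_cases hi : f i x = M
    · exact hkey i hi
    · exact hkey2 i hi
  obtain ⟨t, ht⟩ := hall.exists
  have := hmin (x + t • d)
  have hsup : Finset.univ.sup' ⟨⟨0, hm⟩, Finset.mem_univ _⟩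
      (fun i => f i (x + t • d)) < M :=
    (Finset.sup'_lt_iff _).mpr (fun i _ => ht i)
  linarith
end

section
/- Let M be a nonempty finite set of pairs (a,b) of distinct points in ℝ², and define h_M(x) = max_{(a,b)∈M} (‖a−x‖+‖b−x‖)/‖a−b‖. Suppose h_M attains its global minimum over ℝ² at the origin o and h_M(o) > 1. Then o ∈ conv{ℓ_{ab} : (a,b) ∈ M₁}, where M₁ = {(a,b) ∈ M : (‖a‖+‖b‖)/‖a−b‖ = h_M(o)}. -/
open Filter Real
open scoped Topology RealInnerProductSpace

lemma hasDerivAt_norm_line (a v : EuclideanSpace ℝ (Fin 2)) (ha : a ≠ 0) :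
    HasDerivAt (fun t : ℝ => ‖a - t • v‖) (-⟪a, v⟫ / ‖a‖) 0 := by
  have key : ⟪a,a⟫ - 2*((0:ℝ)*⟪a,v⟫) + (0:ℝ)^2*⟪v,v⟫ = ‖a‖*‖a‖ := by
    rw [real_inner_self_eq_norm_mul_norm]; ring
  have hq : HasDerivAt (fun t : ℝ => ⟪a,a⟫ - 2*(t*⟪a,v⟫) + t^2*⟪v,v⟫)
      (-2*⟪a,v⟫) 0 := by
    have h1 : HasDerivAt (fun t : ℝ => ⟪a,a⟫ - 2*(t*⟪a,v⟫) + t^2*⟪v,v⟫)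
        (0 - 2*(1*⟪a,v⟫) + (2*0^1*1)*⟪v,v⟫) 0 := by
      exact ((hasDerivAt_const _ _).sub (((hasDerivAt_id 0).mul_const _).const_mul 2)).add
        (((hasDerivAt_id 0).pow 2).mul_const _)
    convert h1 using 1; ring
  have hne : (⟪a,a⟫ - 2*((0:ℝ)*⟪a,v⟫) + (0:ℝ)^2*⟪v,v⟫) ≠ 0 := by
    rw [key]; exact mul_ne_zero (norm_ne_zero_iff.mpr ha) (norm_ne_zero_iff.mpr ha)
  have hd := hq.sqrt hne
  have heq : (fun t : ℝ => Real.sqrt (⟪a,a⟫ - 2*(t*⟪a,v⟫) + t^2*⟪v,v⟫))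
      = fun t : ℝ => ‖a - t • v‖ := by
    funext t
    rw [← Real.sqrt_sq (norm_nonneg (a - t • v)), ← real_inner_self_eq_norm_sq]
    congr 1
    rw [real_inner_sub_sub_self]
    simp only [real_inner_smul_left, real_inner_smul_right]
    ring
  rw [heq] at hd
  convert hd using 1
  rw [key, Real.sqrt_mul_self (norm_nonneg a)]
  ring

lemma eventually_lt_self_of_deriv_neg {φ : ℝ → ℝ} {d : ℝ} (hφ : HasDerivAt φ d 0)
    (hd : d < 0) : ∀ᶠ t in 𝓝[>] (0:ℝ), φ t < φ 0 := by
  have hs := hasDerivAt_iff_tendsto_slope.mp hφ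
  have h1 : ∀ᶠ t in 𝓝[≠] (0:ℝ), slope φ 0 t < 0 := hs.eventually_lt_const hd
  have h2 : (𝓝[>] (0:ℝ)) ≤ 𝓝[≠] (0:ℝ) :=
    nhdsWithin_mono 0 (fun x hx => ne_of_gt hx)
  filter_upwards [h1.filter_mono h2, self_mem_nhdsWithin] with t ht htpos
  have hslope : (φ t - φ 0) / t < 0 := by simpa [slope_def_field] using ht
  have htp : (0:ℝ) < t := htpos
  have h3 := mul_neg_of_neg_of_pos hslope htp
  rw [div_mul_cancel₀ _ (ne_of_gt htp)] at h3
  linarith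



/-- The point `ℓ_{xy}` on the segment `xy` whose ray from the origin bisects the angle
between `x` and `y`. -/
noncomputable def ellPoint (x y : EuclideanSpace ℝ (Fin 2)) : EuclideanSpace ℝ (Fin 2) :=
  (‖y‖ / (‖x‖ + ‖y‖)) • x + (‖x‖ / (‖x‖ + ‖y‖)) • y

/-- let `M` be a nonempty finite set of pairs of distinct points in the
plane, and `h_M (x) = max_{(a,b) ∈ M} (‖a - x‖ + ‖b - x‖)/‖a - b‖`. If `h_M` attains
its global minimum at the origin and `h_M 0 > 1`, then the origin lies in the convex
hull of the points `ℓ_{ab}` over the active pairs `(a, b) ∈ M₁`. -/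
theorem zero_mem_convexHull_ell (M : Finset (EuclideanSpace ℝ (Fin 2) × EuclideanSpace ℝ (Fin 2)))
    (hne : M.Nonempty) (hdist : ∀ p ∈ M, p.1 ≠ p.2)
    (hmin : ∀ x : EuclideanSpace ℝ (Fin 2),
      M.sup' hne (fun p => (‖p.1 - 0‖ + ‖p.2 - 0‖) / ‖p.1 - p.2‖)
        ≤ M.sup' hne (fun p => (‖p.1 - x‖ + ‖p.2 - x‖) / ‖p.1 - p.2‖))
    (hgt : 1 < M.sup' hne (fun p => (‖p.1 - 0‖ + ‖p.2 - 0‖) / ‖p.1 - p.2‖)) :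
    (0 : EuclideanSpace ℝ (Fin 2)) ∈ convexHull ℝ
      {z : EuclideanSpace ℝ (Fin 2) | ∃ p ∈ M,
        (‖p.1‖ + ‖p.2‖) / ‖p.1 - p.2‖
          = M.sup' hne (fun p => (‖p.1 - 0‖ + ‖p.2 - 0‖) / ‖p.1 - p.2‖) ∧
        z = ellPoint p.1 p.2} := by
  set h0 := M.sup' hne (fun p => (‖p.1 - 0‖ + ‖p.2 - 0‖) / ‖p.1 - p.2‖) with hh0
  set S := {z : EuclideanSpace ℝ (Fin 2) | ∃ p ∈ M,
      (‖p.1‖ + ‖p.2‖) / ‖p.1 - p.2‖ = h0 ∧ z = ellPoint p.1 p.2} with hS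
  by_contra hnot
  -- each p ∈ M has f_p(0) ≤ h0
  have hle : ∀ p ∈ M, (‖p.1‖ + ‖p.2‖) / ‖p.1 - p.2‖ ≤ h0 := by
    intro p hp
    have h := Finset.le_sup' (fun p : EuclideanSpace ℝ (Fin 2) × EuclideanSpace ℝ (Fin 2) =>
      (‖p.1 - 0‖ + ‖p.2 - 0‖) / ‖p.1 - p.2‖) hp
    rw [sub_zero, sub_zero] at h
    exact h
  have hSfin : S.Finite := by
    apply Set.Finite.subset (M.finite_toSet.image (fun p => ellPoint p.1 p.2))
    rintro z ⟨p, hp, -, rfl⟩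
    exact ⟨p, hp, rfl⟩
  obtain ⟨f, u, hf0, hfS⟩ := geometric_hahn_banach_point_closed
    (convex_convexHull ℝ S) (hSfin.isClosed_convexHull (𝕜 := ℝ)) hnot
  rw [map_zero] at hf0
  set v := (InnerProductSpace.toDual ℝ (EuclideanSpace ℝ (Fin 2))).symm f with hv
  have hfv : ∀ x, ⟪v, x⟫ = f x := fun x => InnerProductSpace.toDual_symm_apply
  -- key eventual bound for each pair
  have key : ∀ p ∈ M, ∀ᶠ t in 𝓝[>] (0:ℝ),
      (‖p.1 - t • v‖ + ‖p.2 - t • v‖) / ‖p.1 - p.2‖ < h0 := by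
    intro p hp
    obtain ⟨a, b⟩ := p
    simp only at *
    have hab : a ≠ b := hdist (a, b) hp
    have hnab : (0:ℝ) < ‖a - b‖ := by
      rw [norm_pos_iff, sub_ne_zero]; exact hab
    rcases eq_or_lt_of_le (hle (a, b) hp) with hact | hina
    · -- active pair
      have ha : a ≠ 0 := by
        rintro rfl
        rw [← hact] at hgt
        simp at hgt
        rw [div_self (ne_of_gt (by simpa using hnab))] at hgt
        exact lt_irrefl _ hgt
      have hb : b ≠ 0 := by
        rintro rfl
        rw [← hact] at hgt
        simp at hgt
        rw [div_self (ne_of_gt (by simpa using hnab))] at hgt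
        exact lt_irrefl _ hgt
      have hna : (0:ℝ) < ‖a‖ := norm_pos_iff.mpr ha
      have hnb : (0:ℝ) < ‖b‖ := norm_pos_iff.mpr hb
      -- ℓ ∈ S, so 0 < u < f ℓ
      have hmem : ellPoint a b ∈ S := ⟨(a, b), hp, hact, rfl⟩
      have hfl : 0 < f (ellPoint a b) :=
        hf0.trans (hfS _ (subset_convexHull ℝ S hmem))
      have hs : (0:ℝ) < ‖a‖ + ‖b‖ := by linarith
      have hip : 0 < (‖b‖/(‖a‖+‖b‖)) * ⟪v, a⟫ + (‖a‖/(‖a‖+‖b‖)) * ⟪v, b⟫ := by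
        have hexp : ⟪v, ellPoint a b⟫
            = (‖b‖/(‖a‖+‖b‖)) * ⟪v, a⟫ + (‖a‖/(‖a‖+‖b‖)) * ⟪v, b⟫ := by
          rw [ellPoint, inner_add_right, real_inner_smul_right, real_inner_smul_right]
        rw [← hexp, hfv]
        exact hfl
      have hX : 0 < ‖b‖ * ⟪v, a⟫ + ‖a‖ * ⟪v, b⟫ := by
        rw [div_mul_eq_mul_div, div_mul_eq_mul_div, ← add_div] at hip
        rcases div_pos_iff.mp hip with ⟨h1, -⟩ | ⟨-, h2⟩
        · exact h1
        · linarith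
      -- derivative
      have hda := hasDerivAt_norm_line a v ha
      have hdb := hasDerivAt_norm_line b v hb
      have hφ : HasDerivAt (fun t : ℝ => (‖a - t • v‖ + ‖b - t • v‖) / ‖a - b‖)
          ((-⟪a, v⟫ / ‖a‖ + -⟪b, v⟫ / ‖b‖) / ‖a - b‖) 0 := (hda.add hdb).div_const _
      have hdneg : (-⟪a, v⟫ / ‖a‖ + -⟪b, v⟫ / ‖b‖) / ‖a - b‖ < 0 := by
        apply div_neg_of_neg_of_pos _ hnab
        have h1 : ⟪a, v⟫ = ⟪v, a⟫ := real_inner_comm v a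
        have h2 : ⟪b, v⟫ = ⟪v, b⟫ := real_inner_comm v b
        rw [h1, h2]
        rw [div_add_div _ _ (ne_of_gt hna) (ne_of_gt hnb)]
        apply div_neg_of_neg_of_pos _ (mul_pos hna hnb)
        nlinarith [hX]
      have := eventually_lt_self_of_deriv_neg hφ hdneg
      refine this.mono fun t ht => ?_
      calc (‖a - t • v‖ + ‖b - t • v‖) / ‖a - b‖
          < (‖a - (0:ℝ) • v‖ + ‖b - (0:ℝ) • v‖) / ‖a - b‖ := ht
        _ = h0 := by rw [← hact]; simp
    · -- inactive pair: continuity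
      have hcont : ContinuousAt (fun t : ℝ => (‖a - t • v‖ + ‖b - t • v‖) / ‖a - b‖) 0 := by
        fun_prop
      have htend := hcont.tendsto
      simp only [zero_smul, sub_zero] at htend
      have hina' : (‖a‖ + ‖b‖) / ‖a - b‖ < h0 := hina
      exact (htend.eventually_lt_const hina').filter_mono nhdsWithin_le_nhds
  -- combine
  have hall : ∀ᶠ t in 𝓝[>] (0:ℝ), ∀ p ∈ M,
      (‖p.1 - t • v‖ + ‖p.2 - t • v‖) / ‖p.1 - p.2‖ < h0 :=
    (eventually_all_finset M).mpr key
  obtain ⟨t, ht⟩ := hall.exists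
  have hlt : M.sup' hne (fun p => (‖p.1 - t • v‖ + ‖p.2 - t • v‖) / ‖p.1 - p.2‖) < h0 :=
    (Finset.sup'_lt_iff hne).mpr ht
  exact absurd (hmin (t • v)) (not_le.mpr hlt)
end

section
/- Let λ > 2/√3 and let x and y be nonzero vectors in ℝ² satisfying ‖x‖+‖y‖ ≥ λ‖x−y‖. Then the angle between x and y (equivalently, the angle ∠x0y at the origin) is strictly less than 2π/3. -/
/-- if `λ > 2/√3` and `x, y` are nonzero vectors in the plane with
`‖x‖ + ‖y‖ ≥ λ ‖x - y‖`, then the angle between `x` and `y` is strictly less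
than `2π/3`. -/
theorem angle_lt_of_norm_add (lam : ℝ) (hlam : 2 / Real.sqrt 3 < lam)
    (x y : EuclideanSpace ℝ (Fin 2)) (hx : x ≠ 0) (hy : y ≠ 0)
    (h : lam * ‖x - y‖ ≤ ‖x‖ + ‖y‖) :
    InnerProductGeometry.angle x y < 2 * Real.pi / 3 := by
  by_contra hcon
  push_neg at hcon
  have ha : (0:ℝ) < ‖x‖ := norm_pos_iff.mpr hx
  have hb : (0:ℝ) < ‖y‖ := norm_pos_iff.mpr hy
  have hs3 : Real.sqrt 3 > 0 := Real.sqrt_pos.mpr (by norm_num)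
  have hs3sq : Real.sqrt 3 * Real.sqrt 3 = 3 := Real.mul_self_sqrt (by norm_num)
  have hlam0 : 0 < lam := lt_trans (by positivity) hlam
  -- cos of angle ≤ cos (2π/3) = -1/2
  have hle : Real.cos (InnerProductGeometry.angle x y) ≤ Real.cos (2 * Real.pi / 3) :=
    Real.cos_le_cos_of_nonneg_of_le_pi (by positivity)
      (InnerProductGeometry.angle_le_pi x y) hcon
  have hcval : Real.cos (2 * Real.pi / 3) = -(1/2) := by
    have : 2 * Real.pi / 3 = Real.pi - Real.pi / 3 := by ring
    rw [this, Real.cos_pi_sub, Real.cos_pi_div_three]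
  rw [hcval, InnerProductGeometry.cos_angle] at hle
  have hinner : (inner ℝ x y : ℝ) ≤ -(1/2) * (‖x‖ * ‖y‖) := by
    have := mul_le_mul_of_nonneg_right hle (le_of_lt (mul_pos ha hb))
    rwa [div_mul_cancel₀] at this
    positivity
  have hsub : ‖x - y‖ * ‖x - y‖ = ‖x‖ * ‖x‖ - 2 * (inner ℝ x y : ℝ) + ‖y‖ * ‖y‖ := by
    rw [@norm_sub_mul_self_real]
  have hc0 : (0:ℝ) ≤ ‖x - y‖ := norm_nonneg _
  -- ‖x-y‖ ≥ √3/2 (a+b)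
  have key : Real.sqrt 3 / 2 * (‖x‖ + ‖y‖) ≤ ‖x - y‖ := by
    nlinarith [sq_nonneg (‖x‖ - ‖y‖), sq_nonneg (‖x - y‖ - Real.sqrt 3 / 2 * (‖x‖ + ‖y‖)),
      mul_pos ha hb]
  have : lam * (Real.sqrt 3 / 2 * (‖x‖ + ‖y‖)) ≤ ‖x‖ + ‖y‖ :=
    le_trans (mul_le_mul_of_nonneg_left key (le_of_lt hlam0)) h
  have hab : 0 < ‖x‖ + ‖y‖ := by linarith
  have h2 : 2 < lam * Real.sqrt 3 := (div_lt_iff₀ hs3).mp hlam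
  nlinarith [mul_lt_mul_of_pos_right h2 hab]
end

section
/- Let λ > 2/√3 and let M₂ be a finite set of pairs (a,b) of nonzero points in ℝ² whose endpoints are pairwise distinct (the pairs form a matching), such that ‖a‖+‖b‖ = λ‖a−b‖ for every pair (a,b) ∈ M₂ and the origin lies in conv{ℓ_{ab} : (a,b) ∈ M₂}. Suppose there is an endpoint x of some pair such that the angle between x and y is strictly less than 2π/3 for every other endpoint y of a pair in M₂. Then there exist two distinct pairs (a₁,b₁),(a₂,b₂) ∈ M₂ such that ‖b₁‖+‖a₂‖ < λ‖b₁−a₂‖ and ‖a₁‖+‖b₂‖ < λ‖a₁−b₂‖; that is, the associated blue–red graph contains an alternating cycle a₁b₁a₂b₂. -/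
open scoped RealInnerProductSpace

open Complex in
lemma re_helper (r s a b : ℝ) :
    ((starRingEnd ℂ) ((r:ℂ) * Complex.exp ((a:ℂ) * Complex.I)) *
      ((s:ℂ) * Complex.exp ((b:ℂ) * Complex.I))).re = r * s * Real.cos (b - a) := by
  simp [Complex.exp_mul_I, Complex.mul_re, Complex.mul_im, Complex.cos_ofReal_re,
    Complex.sin_ofReal_re, Real.cos_sub]
  ring

open Complex in
lemma re_exp (μ r θ : ℝ) :
    ((starRingEnd ℂ) (Complex.exp ((μ:ℂ) * Complex.I)) *
      ((r:ℂ) * Complex.exp ((θ:ℂ) * Complex.I))).re = r * Real.cos (θ - μ) := by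
  have h := re_helper 1 r μ θ
  simpa using h

lemma cos23 : Real.cos (2*Real.pi/3) = -(1/2) := by
  rw [show 2*Real.pi/3 = Real.pi - Real.pi/3 by ring, Real.cos_pi_sub, Real.cos_pi_div_three]

lemma cosBound {t : ℝ} (h1 : 2*Real.pi/3 ≤ t) (h2 : t ≤ 4*Real.pi/3) : Real.cos t ≤ -(1/2) := by
  have hpi := Real.pi_pos
  have h : Real.cos (|t - Real.pi|) ≥ 1/2 := by
    rw [← Real.cos_pi_div_three]
    apply Real.cos_le_cos_of_nonneg_of_le_pi (abs_nonneg _) (by linarith)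
    rw [abs_le]; constructor <;> linarith
  rw [Real.cos_abs] at h
  rw [show t = (t - Real.pi) + Real.pi by ring, Real.cos_add_pi]
  linarith

lemma lam_sq {lam : ℝ} (hlam : 2 / Real.sqrt 3 < lam) : 4/3 < lam^2 ∧ 0 < lam := by
  have h3 : (0:ℝ) < Real.sqrt 3 := Real.sqrt_pos.2 (by norm_num)
  have h0 : (0:ℝ) < 2 / Real.sqrt 3 := by positivity
  have hs : Real.sqrt 3 ^ 2 = 3 := Real.sq_sqrt (by norm_num)
  have hl : 0 < lam := lt_trans h0 hlam
  refine ⟨?_, hl⟩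
  have h2 : (2 / Real.sqrt 3)^2 < lam^2 := by
    apply pow_lt_pow_left₀ hlam (le_of_lt h0)
    norm_num
  rw [div_pow, hs] at h2
  linarith

lemma red_of_inner {lam : ℝ} (hlam : 2 / Real.sqrt 3 < lam)
    {u v : EuclideanSpace ℝ (Fin 2)} (hu : u ≠ 0) (hv : v ≠ 0)
    (h : ⟪u, v⟫ ≤ -(‖u‖ * ‖v‖)/2) : ‖u‖ + ‖v‖ < lam * ‖u - v‖ := by
  obtain ⟨hl2, hl⟩ := lam_sq hlam
  have hs : 0 < ‖u‖ := norm_pos_iff.2 hu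
  have ht : 0 < ‖v‖ := norm_pos_iff.2 hv
  have hn := norm_sub_sq_real u v
  have key : (‖u‖ + ‖v‖)^2 < (lam * ‖u - v‖)^2 := by
    have h1 : (lam * ‖u - v‖)^2 = lam^2 * (‖u‖^2 - 2*⟪u,v⟫ + ‖v‖^2) := by
      rw [mul_pow, hn]
    nlinarith [sq_nonneg (‖u‖ - ‖v‖), mul_pos hs ht, sq_nonneg (‖u‖ + ‖v‖)]
  exact lt_of_pow_lt_pow_left₀ 2 (by positivity) key

lemma blue_inner {lam : ℝ} (hlam : 2 / Real.sqrt 3 < lam)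
    {u v : EuclideanSpace ℝ (Fin 2)} (hu : u ≠ 0) (hv : v ≠ 0)
    (h : ‖u‖ + ‖v‖ = lam * ‖u - v‖) : -(‖u‖ * ‖v‖)/2 < ⟪u, v⟫ := by
  obtain ⟨hl2, hl⟩ := lam_sq hlam
  have hs : 0 < ‖u‖ := norm_pos_iff.2 hu
  have ht : 0 < ‖v‖ := norm_pos_iff.2 hv
  have hn := norm_sub_sq_real u v
  have h2 : (‖u‖ + ‖v‖)^2 = lam^2 * (‖u‖^2 - 2*⟪u,v⟫ + ‖v‖^2) := by
    rw [h, mul_pow, hn]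
  nlinarith [sq_nonneg (‖u‖ - ‖v‖), mul_pos hs ht]



set_option maxHeartbeats 1000000 in
/-- main lemma: let `λ > 2/√3` and let `M₂` be a finite matching of pairs
of nonzero points of the plane with pairwise distinct endpoints, such that
`‖a‖ + ‖b‖ = λ‖a - b‖` for each pair (blue edges through the boundary of the `λ`-ellipse)
and `0 ∈ conv {ℓ_{ab}}`. If some endpoint `x` makes an angle `< 2π/3` with every other
endpoint, then there are two distinct pairs `(a₁,b₁), (a₂,b₂)` (up to swapping the two
points within a pair) whose diagonals `b₁a₂` and `a₁b₂` are red edges, i.e. the graph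
contains an alternating cycle `a₁ b₁ a₂ b₂`. -/
theorem exists_alternating_cycle (lam : ℝ) (hlam : 2 / Real.sqrt 3 < lam)
    (M : Finset (EuclideanSpace ℝ (Fin 2) × EuclideanSpace ℝ (Fin 2)))
    (hnz : ∀ p ∈ M, p.1 ≠ 0 ∧ p.2 ≠ 0)
    (hpair : ∀ p ∈ M, p.1 ≠ p.2)
    (hmatch : ∀ p ∈ M, ∀ q ∈ M, p ≠ q →
      p.1 ≠ q.1 ∧ p.1 ≠ q.2 ∧ p.2 ≠ q.1 ∧ p.2 ≠ q.2)
    (hblue : ∀ p ∈ M, ‖p.1‖ + ‖p.2‖ = lam * ‖p.1 - p.2‖)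
    (hconv : (0 : EuclideanSpace ℝ (Fin 2)) ∈ convexHull ℝ
      {z : EuclideanSpace ℝ (Fin 2) | ∃ p ∈ M, z = ellPoint p.1 p.2})
    (x : EuclideanSpace ℝ (Fin 2)) (hx : ∃ p ∈ M, x = p.1 ∨ x = p.2)
    (hangle : ∀ y : EuclideanSpace ℝ (Fin 2), (∃ p ∈ M, y = p.1 ∨ y = p.2) → y ≠ x →
      InnerProductGeometry.angle x y < 2 * Real.pi / 3) :
    ∃ a₁ b₁ a₂ b₂ : EuclideanSpace ℝ (Fin 2),
      ((a₁, b₁) ∈ M ∨ (b₁, a₁) ∈ M) ∧ ((a₂, b₂) ∈ M ∨ (b₂, a₂) ∈ M) ∧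
      ({a₁, b₁} : Set (EuclideanSpace ℝ (Fin 2))) ≠ {a₂, b₂} ∧
      ‖b₁‖ + ‖a₂‖ < lam * ‖b₁ - a₂‖ ∧ ‖a₁‖ + ‖b₂‖ < lam * ‖a₁ - b₂‖ := by
  classical
  have hpi := Real.pi_pos
  obtain ⟨p₀, hp₀, hxp₀⟩ := hx
  have hxne : x ≠ 0 := by
    rcases hxp₀ with h | h
    · rw [h]; exact (hnz p₀ hp₀).1
    · rw [h]; exact (hnz p₀ hp₀).2
  have hxnorm : (0:ℝ) < ‖x‖ := norm_pos_iff.2 hxne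
  set g : EuclideanSpace ℝ (Fin 2) ≃ₗᵢ[ℝ] ℂ := Complex.orthonormalBasisOneI.repr.symm with hgdef
  set w : EuclideanSpace ℝ (Fin 2) → ℂ := fun y => g y * (starRingEnd ℂ) (g x) with hwdef
  set φ : EuclideanSpace ℝ (Fin 2) → ℝ := fun y => (w y).arg with hφdef
  have hargle : ∀ y, |φ y| ≤ Real.pi := fun y => Complex.abs_arg_le_pi _
  have habs : ∀ y, ‖w y‖ = ‖y‖ * ‖x‖ := by
    intro y
    show ‖g y * (starRingEnd ℂ) (g x)‖ = ‖y‖ * ‖x‖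
    rw [norm_mul, Complex.norm_conj]
    simp only [LinearIsometryEquiv.norm_map]
  have hwy : ∀ y, w y = ((‖y‖ * ‖x‖ : ℝ) : ℂ) * Complex.exp ((φ y : ℂ) * Complex.I) := by
    intro y
    rw [← habs y]
    exact (Complex.norm_mul_exp_arg_mul_I (w y)).symm
  -- inner product formula
  have hinner : ∀ a b : EuclideanSpace ℝ (Fin 2),
      ⟪a, b⟫ = ‖a‖ * ‖b‖ * Real.cos (φ b - φ a) := by
    intro a b
    have h1 : ⟪a, b⟫ = ((starRingEnd ℂ) (g a) * g b).re := by rw [inner_map_complex g a b, mul_comm]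
    have h2 : ((starRingEnd ℂ) (w a) * w b).re
        = (‖a‖*‖x‖) * (‖b‖*‖x‖) * Real.cos (φ b - φ a) := by
      rw [hwy a, hwy b]; exact re_helper _ _ _ _
    have h3 : (starRingEnd ℂ) (w a) * w b
        = ((starRingEnd ℂ) (g a) * g b) * ((‖x‖^2 : ℝ) : ℂ) := by
      have hx2 : ((‖x‖^2 : ℝ) : ℂ) = g x * (starRingEnd ℂ) (g x) := by
        rw [Complex.mul_conj]
        norm_cast
        rw [Complex.normSq_eq_norm_sq, LinearIsometryEquiv.norm_map]
      simp only [hwdef, map_mul, Complex.conj_conj]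
      rw [hx2]; ring
    have h4 : ((starRingEnd ℂ) (g a) * g b).re * ‖x‖^2
        = (‖a‖*‖x‖) * (‖b‖*‖x‖) * Real.cos (φ b - φ a) := by
      rw [← h2, h3]
      rw [mul_comm ((starRingEnd ℂ) (g a) * g b) _, Complex.re_ofReal_mul]
      ring
    rw [h1]
    have hx2 : (0:ℝ) < ‖x‖^2 := by positivity
    have := h4
    field_simp at this ⊢
    nlinarith [this]
  -- φ x = 0
  have hφx : φ x = 0 := by
    have hwx : w x = ((Complex.normSq (g x) : ℝ) : ℂ) := Complex.mul_conj _
    show (w x).arg = 0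
    rw [hwx]
    exact Complex.arg_ofReal_of_nonneg (Complex.normSq_nonneg _)
  -- bound on each endpoint's angle
  have hφbound : ∀ y, (∃ p ∈ M, y = p.1 ∨ y = p.2) → |φ y| < 2*Real.pi/3 := by
    intro y hy
    by_cases hyx : y = x
    · rw [hyx, hφx]; simp; linarith
    · have hangxy := hangle y hy hyx
      have hyne : y ≠ 0 := by
        obtain ⟨p, hp, h | h⟩ := hy
        · rw [h]; exact (hnz p hp).1
        · rw [h]; exact (hnz p hp).2
      have hynorm : (0:ℝ) < ‖y‖ := norm_pos_iff.2 hyne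
      by_contra hcon
      push_neg at hcon
      have hca := InnerProductGeometry.cos_angle x y
      rw [hinner x y, hφx, sub_zero] at hca
      have hca' : Real.cos (InnerProductGeometry.angle x y) = Real.cos (φ y) := by
        rw [hca]; field_simp
      have hgt : Real.cos (2*Real.pi/3) < Real.cos (InnerProductGeometry.angle x y) :=
        Real.strictAntiOn_cos
          ⟨InnerProductGeometry.angle_nonneg x y,
            by linarith [InnerProductGeometry.angle_le_pi x y]⟩
          ⟨by linarith, by linarith⟩ hangxy
      rw [cos23, hca'] at hgt
      have h5 : Real.cos (φ y) ≤ -(1/2) := by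
        rw [← Real.cos_abs]
        exact cosBound hcon (le_trans (hargle y) (by linarith))
      linarith
  -- bound on the angular width of each blue pair
  have hpairdiff : ∀ p ∈ M, |φ p.1 - φ p.2| < 2*Real.pi/3 := by
    intro p hp
    have h1 := blue_inner hlam (hnz p hp).1 (hnz p hp).2 (hblue p hp)
    rw [hinner p.1 p.2] at h1
    have hs : 0 < ‖p.1‖ := norm_pos_iff.2 (hnz p hp).1
    have ht : 0 < ‖p.2‖ := norm_pos_iff.2 (hnz p hp).2
    have hcos : -(1/2) < Real.cos (φ p.2 - φ p.1) := by nlinarith [mul_pos hs ht]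
    have hb1 := hφbound p.1 ⟨p, hp, Or.inl rfl⟩
    have hb2 := hφbound p.2 ⟨p, hp, Or.inr rfl⟩
    rw [abs_lt] at hb1 hb2
    by_contra hcon
    push_neg at hcon
    have h5 : Real.cos (φ p.2 - φ p.1) ≤ -(1/2) := by
      rw [← Real.cos_abs]
      apply cosBound
      · rw [abs_sub_comm]; exact hcon
      · rw [abs_le]; constructor <;> linarith
    linarith
  -- the half-angle directions of two pairs must be at least π apart
  set ψ : (EuclideanSpace ℝ (Fin 2) × EuclideanSpace ℝ (Fin 2)) → ℝ :=
    fun p => (φ p.1 + φ p.2)/2 with hψdef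
  have key : ∃ p ∈ M, ∃ q ∈ M, Real.pi ≤ ψ p - ψ q := by
    by_contra hcon
    push_neg at hcon
    have hMne : M.Nonempty := ⟨p₀, hp₀⟩
    obtain ⟨ps, hps, hsupEq⟩ := Finset.exists_mem_eq_sup' hMne ψ
    obtain ⟨qs, hqs, hinfEq⟩ := Finset.exists_mem_eq_inf' hMne ψ
    set μ := (M.sup' hMne ψ + M.inf' hMne ψ)/2 with hμdef
    have hSI : M.sup' hMne ψ - M.inf' hMne ψ < Real.pi := by
      rw [hsupEq, hinfEq]; exact hcon ps hps qs hqs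
    have hμb : ∀ p ∈ M, |ψ p - μ| < Real.pi/2 := by
      intro p hp
      have h1 : ψ p ≤ M.sup' hMne ψ := Finset.le_sup' ψ hp
      have h2 : M.inf' hMne ψ ≤ ψ p := Finset.inf'_le ψ hp
      rw [abs_lt, hμdef]
      constructor <;> linarith
    set n := g.symm (Complex.exp ((μ:ℂ) * Complex.I) * g x) with hndef
    have hgn : g n = Complex.exp ((μ:ℂ) * Complex.I) * g x := g.apply_symm_apply _
    have hninner : ∀ y, ⟪n, y⟫ = ‖y‖ * ‖x‖ * Real.cos (φ y - μ) := by
      intro y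
      rw [inner_map_complex g n y, hgn, map_mul, mul_comm]
      have h6 : (starRingEnd ℂ) (Complex.exp ((μ:ℂ)*Complex.I)) * (starRingEnd ℂ) (g x) * g y
          = (starRingEnd ℂ) (Complex.exp ((μ:ℂ)*Complex.I)) * w y := by
        rw [hwdef]; ring
      rw [h6, hwy y]
      exact re_exp μ _ (φ y)
    have hsub : {z : EuclideanSpace ℝ (Fin 2) | ∃ p ∈ M, z = ellPoint p.1 p.2}
        ⊆ {z | (0:ℝ) < ⟪n, z⟫} := by
      rintro z ⟨p, hp, rfl⟩
      have hs : 0 < ‖p.1‖ := norm_pos_iff.2 (hnz p hp).1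
      have ht : 0 < ‖p.2‖ := norm_pos_iff.2 (hnz p hp).2
      have hsum : (0:ℝ) < ‖p.1‖ + ‖p.2‖ := by linarith
      show (0:ℝ) < ⟪n, ellPoint p.1 p.2⟫
      rw [ellPoint, inner_add_right, real_inner_smul_right, real_inner_smul_right,
        hninner p.1, hninner p.2]
      have hc1 : 0 < Real.cos (φ p.1 - μ) + Real.cos (φ p.2 - μ) := by
        rw [Real.cos_add_cos]
        have e1 : (φ p.1 - μ + (φ p.2 - μ))/2 = ψ p - μ := by rw [hψdef]; ring
        have e2 : (φ p.1 - μ - (φ p.2 - μ))/2 = (φ p.1 - φ p.2)/2 := by ring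
        rw [e1, e2]
        have hμp := hμb p hp
        have hpd := hpairdiff p hp
        rw [abs_lt] at hμp hpd
        have c1 : 0 < Real.cos (ψ p - μ) :=
          Real.cos_pos_of_mem_Ioo ⟨by linarith [hμp.1], by linarith [hμp.2]⟩
        have c2 : 0 < Real.cos ((φ p.1 - φ p.2)/2) :=
          Real.cos_pos_of_mem_Ioo ⟨by linarith [hpd.1], by linarith [hpd.2]⟩
        positivity
      have e3 : ‖p.2‖ / (‖p.1‖ + ‖p.2‖) * (‖p.1‖ * ‖x‖ * Real.cos (φ p.1 - μ))
          + ‖p.1‖ / (‖p.1‖ + ‖p.2‖) * (‖p.2‖ * ‖x‖ * Real.cos (φ p.2 - μ))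
          = (‖p.1‖ * ‖p.2‖ * ‖x‖ / (‖p.1‖ + ‖p.2‖))
            * (Real.cos (φ p.1 - μ) + Real.cos (φ p.2 - μ)) := by
        field_simp
      rw [e3]
      have hcoef : 0 < ‖p.1‖ * ‖p.2‖ * ‖x‖ / (‖p.1‖ + ‖p.2‖) := by positivity
      exact mul_pos hcoef hc1
    have hlin : IsLinearMap ℝ (fun z : EuclideanSpace ℝ (Fin 2) => ⟪n, z⟫) := by
      constructor
      · intro a b; exact inner_add_right _ _ _
      · intro c a; simpa using real_inner_smul_right n a c
    have h0 := convexHull_min hsub (convex_halfSpace_gt hlin 0) hconv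
    simp only [Set.mem_setOf_eq, inner_zero_right] at h0
    exact lt_irrefl 0 h0
  -- extract the two pairs and conclude
  obtain ⟨p, hp, q, hq, hpq⟩ := key
  rw [hψdef] at hpq
  simp only at hpq
  have b11 := hφbound p.1 ⟨p, hp, Or.inl rfl⟩
  have b12 := hφbound p.2 ⟨p, hp, Or.inr rfl⟩
  have b21 := hφbound q.1 ⟨q, hq, Or.inl rfl⟩
  have b22 := hφbound q.2 ⟨q, hq, Or.inr rfl⟩
  rw [abs_lt] at b11 b12 b21 b22
  have hd1a : 2*Real.pi/3 ≤ φ p.1 - φ q.2 := by linarith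
  have hd1b : φ p.1 - φ q.2 ≤ 4*Real.pi/3 := by linarith
  have hd2a : 2*Real.pi/3 ≤ φ p.2 - φ q.1 := by linarith
  have hd2b : φ p.2 - φ q.1 ≤ 4*Real.pi/3 := by linarith
  have hcos1 : Real.cos (φ p.1 - φ q.2) ≤ -(1/2) := cosBound hd1a hd1b
  have hcos2 : Real.cos (φ p.2 - φ q.1) ≤ -(1/2) := cosBound hd2a hd2b
  have hne : p ≠ q := by
    rintro rfl; linarith
  obtain ⟨h11, h12, h21, h22⟩ := hmatch p hp q hq hne
  have hs1 : 0 < ‖p.1‖ := norm_pos_iff.2 (hnz p hp).1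
  have hs2 : 0 < ‖p.2‖ := norm_pos_iff.2 (hnz p hp).2
  have ht1 : 0 < ‖q.1‖ := norm_pos_iff.2 (hnz q hq).1
  have ht2 : 0 < ‖q.2‖ := norm_pos_iff.2 (hnz q hq).2
  refine ⟨p.1, p.2, q.1, q.2, Or.inl (by rw [Prod.mk.eta]; exact hp),
    Or.inl (by rw [Prod.mk.eta]; exact hq), ?_, ?_, ?_⟩
  · intro hset
    have hmem : p.1 ∈ ({q.1, q.2} : Set (EuclideanSpace ℝ (Fin 2))) := by
      rw [← hset]; exact Set.mem_insert _ _
    rcases hmem with h | h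
    · exact h11 h
    · exact h12 h
  · apply red_of_inner hlam (hnz p hp).2 (hnz q hq).1
    rw [hinner p.2 q.1,
      show φ q.1 - φ p.2 = -(φ p.2 - φ q.1) by ring, Real.cos_neg]
    nlinarith [mul_pos hs2 ht1]
  · apply red_of_inner hlam (hnz p hp).1 (hnz q hq).2
    rw [hinner p.1 q.2,
      show φ q.2 - φ p.1 = -(φ p.1 - φ q.2) by ring, Real.cos_neg]
    nlinarith [mul_pos hs1 ht2]
end

section
/- Let x and y be nonzero vectors in ℝ² that are not collinear (not scalar multiples of each other), and let z be an interior point of the line segment xy (z = (1−t)x + ty with 0 < t < 1). Then f(x,z) > f(x,y), where f(u,v) := (‖u‖+‖v‖)/‖u−v‖. -/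
/-!
Since `x - z = t • (x - y)`, the inequality reduces to `t * ‖y‖ < ‖z‖ + (1 - t) * ‖x‖`. This is
the triangle inequality for `t • y = z + (-(1 - t) • x)`, and it is strict because the Euclidean
norm is strictly convex and `z` is not a multiple of `x`.
-/

section StrictConvex

variable {E : Type*} [NormedAddCommGroup E] [NormedSpace ℝ E]

lemma smul_add_smul_ne_smul {x y : E} (hncol : ∀ c : ℝ, y ≠ c • x) (s : ℝ) {t : ℝ}
    (ht : t ≠ 0) (c : ℝ) : s • x + t • y ≠ c • x := by
  intro h
  apply hncol ((c - s) / t)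
  rw [div_eq_inv_mul, mul_smul, sub_smul, ← h, add_sub_cancel_left, inv_smul_smul₀ ht]

lemma not_sameRay_add_smul_neg_smul {x y : E} (hx : x ≠ 0) (hncol : ∀ c : ℝ, y ≠ c • x)
    {s t : ℝ} (hs : s ≠ 0) (ht : t ≠ 0) : ¬SameRay ℝ (s • x + t • y) (-(s • x)) := fun h => by
  obtain ⟨r, -, hr⟩ := h.exists_nonneg_right (by simp [hs, hx])
  exact smul_add_smul_ne_smul hncol s ht (-(r * s)) (by rw [hr]; module)

lemma mul_norm_lt_norm_add_mul_norm [StrictConvexSpace ℝ E] {x y : E} (hx : x ≠ 0)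
    (hncol : ∀ c : ℝ, y ≠ c • x) {t : ℝ} (ht0 : 0 < t) (ht1 : t < 1) :
    t * ‖y‖ < ‖(1 - t) • x + t • y‖ + (1 - t) * ‖x‖ := by
  have hray := not_sameRay_add_smul_neg_smul hx hncol (sub_ne_zero.2 ht1.ne') ht0.ne'
  have key := norm_add_lt_of_not_sameRay hray
  rwa [add_neg_cancel_comm, norm_neg, norm_smul, norm_smul, Real.norm_of_nonneg ht0.le,
    Real.norm_of_nonneg (sub_nonneg.2 ht1.le)] at key

end StrictConvex

theorem f_strict_mono_interior_general (x y : EuclideanSpace ℝ (Fin 2))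
    (hx : x ≠ 0) (hncol : ∀ c : ℝ, y ≠ c • x)
    (t : ℝ) (ht0 : 0 < t) (ht1 : t < 1)
    (z : EuclideanSpace ℝ (Fin 2)) (hz : z = (1 - t) • x + t • y) :
    (‖x‖ + ‖y‖) / ‖x - y‖ < (‖x‖ + ‖z‖) / ‖x - z‖ := by
  have hxy : 0 < ‖x - y‖ := norm_pos_iff.2 <| sub_ne_zero.2 fun h => hncol 1 (by rw [one_smul, h])
  have hxz : ‖x - z‖ = t * ‖x - y‖ := by
    rw [show x - z = t • (x - y) by rw [hz]; module, norm_smul, Real.norm_of_nonneg ht0.le]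
  have key := mul_norm_lt_norm_add_mul_norm hx hncol ht0 ht1
  rw [← hz] at key
  calc (‖x‖ + ‖y‖) / ‖x - y‖ = t * (‖x‖ + ‖y‖) / (t * ‖x - y‖) :=
        (mul_div_mul_left _ _ ht0.ne').symm
    _ < (‖x‖ + ‖z‖) / (t * ‖x - y‖) := by gcongr; linarith
    _ = (‖x‖ + ‖z‖) / ‖x - z‖ := by rw [hxz]

/-- let `x, y` be nonzero, non-collinear vectors in the plane and let
`z = (1 - t) x + t y` with `0 < t < 1` be an interior point of the segment `xy`. Then
`f(x, z) > f(x, y)` where `f(u, v) = (‖u‖ + ‖v‖)/‖u - v‖`. -/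
theorem f_strict_mono_interior (x y : EuclideanSpace ℝ (Fin 2))
    (hx : x ≠ 0) (hy : y ≠ 0) (hncol : ∀ c : ℝ, y ≠ c • x)
    (t : ℝ) (ht0 : 0 < t) (ht1 : t < 1)
    (z : EuclideanSpace ℝ (Fin 2)) (hz : z = (1 - t) • x + t • y) :
    (‖x‖ + ‖y‖) / ‖x - y‖ < (‖x‖ + ‖z‖) / ‖x - z‖ :=
  f_strict_mono_interior_general x y hx hncol t ht0 ht1 z hz
end

section
/- Let x be a nonzero vector in ℝ², let p and q be nonzero points lying on a common ray emanating from the origin (i.e., q = t·p for some t > 0), and suppose x is not collinear with p. Let z be a point of the segment pq (so z ≠ 0 and z ≠ x). Then f(x,z) ≥ min{f(x,p), f(x,q)}, where f(u,v) := (‖u‖+‖v‖)/‖u−v‖. -/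
/-! On the segment `pq` of a ray, `‖x‖ + ‖z‖` is an affine function of the position of `z`, while
`‖x - z‖` is convex; a ratio of such functions is bounded below by its values at the endpoints. -/

theorem min_div_le_div_of_le_convex_comb {n₁ n₂ d₁ d₂ n d a b : ℝ} (hn₁ : 0 ≤ n₁) (hn₂ : 0 ≤ n₂)
    (hd₁ : 0 ≤ d₁) (hd₂ : 0 ≤ d₂) (ha : 0 ≤ a) (hb : 0 ≤ b) (hn : a * n₁ + b * n₂ ≤ n)
    (hd : d ≤ a * d₁ + b * d₂) (hd_pos : 0 < d) :
    min (n₁ / d₁) (n₂ / d₂) ≤ n / d := by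
  set m := min (n₁ / d₁) (n₂ / d₂)
  have hm : 0 ≤ m := le_min (div_nonneg hn₁ hd₁) (div_nonneg hn₂ hd₂)
  -- `mul_le_of_le_div₀` also covers `dᵢ = 0`, where `nᵢ / dᵢ = 0`.
  have h₁ : m * d₁ ≤ n₁ := mul_le_of_le_div₀ hn₁ hd₁ (min_le_left _ _)
  have h₂ : m * d₂ ≤ n₂ := mul_le_of_le_div₀ hn₂ hd₂ (min_le_right _ _)
  rw [le_div_iff₀ hd_pos]
  calc m * d ≤ m * (a * d₁ + b * d₂) := mul_le_mul_of_nonneg_left hd hm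
    _ = a * (m * d₁) + b * (m * d₂) := by ring
    _ ≤ a * n₁ + b * n₂ := by gcongr
    _ ≤ n := hn

section NormedSpace

variable {E : Type*} [NormedAddCommGroup E] [NormedSpace ℝ E]

theorem SameRay.norm_smul_add_smul {p q : E} (hpq : SameRay ℝ p q) {a b : ℝ} (ha : 0 ≤ a)
    (hb : 0 ≤ b) : ‖a • p + b • q‖ = a * ‖p‖ + b * ‖q‖ := by
  rw [((hpq.nonneg_smul_left ha).nonneg_smul_right hb).norm_add, norm_smul_of_nonneg ha,
    norm_smul_of_nonneg hb]

theorem norm_sub_smul_add_smul_le (x p q : E) {a b : ℝ} (ha : 0 ≤ a) (hb : 0 ≤ b)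
    (hab : a + b = 1) : ‖x - (a • p + b • q)‖ ≤ a * ‖x - p‖ + b * ‖x - q‖ := by
  have hdecomp : x - (a • p + b • q) = a • (x - p) + b • (x - q) := by
    match_scalars <;> linarith
  calc ‖x - (a • p + b • q)‖ ≤ ‖a • (x - p)‖ + ‖b • (x - q)‖ := hdecomp ▸ norm_add_le _ _
    _ = a * ‖x - p‖ + b * ‖x - q‖ := by rw [norm_smul_of_nonneg ha, norm_smul_of_nonneg hb]

theorem SameRay.min_div_norm_sub_le_of_mem_segment {x p q z : E} (hpq : SameRay ℝ p q)
    (hz : z ∈ segment ℝ p q) (hxz : x ≠ z) :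
    min ((‖x‖ + ‖p‖) / ‖x - p‖) ((‖x‖ + ‖q‖) / ‖x - q‖) ≤ (‖x‖ + ‖z‖) / ‖x - z‖ := by
  obtain ⟨a, b, ha, hb, hab, rfl⟩ := hz
  refine min_div_le_div_of_le_convex_comb (by positivity) (by positivity) (norm_nonneg _)
    (norm_nonneg _) ha hb ?_ (norm_sub_smul_add_smul_le x p q ha hb hab)
    (norm_pos_iff.2 (sub_ne_zero.2 hxz))
  rw [hpq.norm_smul_add_smul ha hb]
  linear_combination ‖x‖ * hab

end NormedSpace

theorem f_on_ray_min_general (x p q : EuclideanSpace ℝ (Fin 2))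
    (t : ℝ) (ht : 0 < t) (hq : q = t • p)
    (hncol : ∀ c : ℝ, x ≠ c • p)
    (z : EuclideanSpace ℝ (Fin 2)) (hz : z ∈ segment ℝ p q) :
    min ((‖x‖ + ‖p‖) / ‖x - p‖) ((‖x‖ + ‖q‖) / ‖x - q‖) ≤ (‖x‖ + ‖z‖) / ‖x - z‖ := by
  subst hq
  have hxz : x ≠ z := by
    obtain ⟨a, b, -, -, -, rfl⟩ := hz
    rw [smul_smul, ← add_smul]
    exact hncol _
  exact (SameRay.sameRay_nonneg_smul_right p ht.le).min_div_norm_sub_le_of_mem_segment hz hxz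

/-- let `x` be a nonzero vector of the plane, let `p` and `q = t • p`
(`t > 0`) be nonzero points on a common ray from the origin with `x` not collinear
with `p`, and let `z` be a point of the segment `pq`. Then
`f(x, z) ≥ min (f(x, p)) (f(x, q))`, where `f(u, v) = (‖u‖ + ‖v‖)/‖u - v‖`. -/
theorem f_on_ray_min (x p q : EuclideanSpace ℝ (Fin 2))
    (hx : x ≠ 0) (hp : p ≠ 0) (t : ℝ) (ht : 0 < t) (hq : q = t • p)
    (hncol : ∀ c : ℝ, x ≠ c • p)
    (z : EuclideanSpace ℝ (Fin 2)) (hz : z ∈ segment ℝ p q) :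
    min ((‖x‖ + ‖p‖) / ‖x - p‖) ((‖x‖ + ‖q‖) / ‖x - q‖) ≤ (‖x‖ + ‖z‖) / ‖x - z‖ :=
  f_on_ray_min_general x p q t ht hq hncol z hz
end
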